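/- Let T > 0, σ ≥ 0, Δ ∈ ℝ, and let the temporary price impact be f(ν) = a₁ν + a₂ with a₁ > 0 and the permanent price impact be g(ν) = c₁ν² + c₂ν with c₁ > 0, c₂ ∈ ℝ. Define H(t,S,q) = q(S − Δ/2 − a₂) − (c₂/2)q² − 4(c₁q + a₁)³ / (9c₁²(T−t)). Then at every point (t,S,q) with 0 ≤ t < T and q > 0, H satisfies the HJB equation: ∂ₜH(t,S,q) + (σ²/2) ∂²_{SS}H(t,S,q) + sup_{ν ≥ 0} { −(c₁ν² + c₂ν) ∂_S H(t,S,q) − ν ∂_q H(t,S,q) + (S − Δ/2 − a₁ν − a₂)ν } = 0. -/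

import Mathlib

/-- Value function for the optimal liquidation problem with linear temporary
price impact `f(ν) = a₁ν + a₂` and quadratic permanent price impact
`g(ν) = c₁ν² + c₂ν`. -/
noncomputable def Hquad (T Δ a₁ a₂ c₁ c₂ : ℝ) (t S q : ℝ) : ℝ :=
  q * (S - Δ / 2 - a₂) - c₂ / 2 * q ^ 2 - 4 * (c₁ * q + a₁) ^ 3 / (9 * c₁ ^ 2 * (T - t))

/-!
`H` is affine in `S` with slope `q`, so `∂²_{SS}H = 0` and the volatility drops out. With
`A = c₁q + a₁ > 0`, the Hamiltonian collapses to the concave quadratic `-Aν² + Bν` with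
`B = 4A²/(3c₁(T−t)) ≥ 0`, whose maximum over `ν ≥ 0` is `B²/(4A) = 4A³/(9c₁²(T−t)²)`,
attained at `ν = B/(2A)`; this is exactly `-∂ₜH`.
-/

theorem isGreatest_neg_quadratic_nonneg {A B : ℝ} (hA : 0 < A) (hB : 0 ≤ B) :
    IsGreatest {y : ℝ | ∃ ν : ℝ, 0 ≤ ν ∧ y = -A * ν ^ 2 + B * ν} (B ^ 2 / (4 * A)) := by
  refine ⟨⟨B / (2 * A), by positivity, by field_simp; ring⟩, ?_⟩
  rintro y ⟨ν, -, rfl⟩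
  rw [le_div_iff₀ (by positivity)]
  nlinarith [sq_nonneg (2 * A * ν - B)]

section Derivatives

variable (T Δ a₁ a₂ c₁ c₂ t S q : ℝ)

theorem hasDerivAt_Hquad_time (hc₁ : c₁ ≠ 0) (ht : t ≠ T) :
    HasDerivAt (fun τ => Hquad T Δ a₁ a₂ c₁ c₂ τ S q)
      (-(4 * (c₁ * q + a₁) ^ 3 / (9 * c₁ ^ 2 * (T - t) ^ 2))) t := by
  have hTt : T - t ≠ 0 := sub_ne_zero.2 ht.symm
  have hden : 9 * c₁ ^ 2 * (T - t) ≠ 0 := by positivity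
  have hlin : HasDerivAt (fun τ => 9 * c₁ ^ 2 * (T - τ)) (-(9 * c₁ ^ 2)) t := by
    simpa using ((hasDerivAt_id' t).const_sub T).const_mul (9 * c₁ ^ 2)
  unfold Hquad
  refine ((hasDerivAt_const t (q * (S - Δ / 2 - a₂) - c₂ / 2 * q ^ 2)).sub
    ((hasDerivAt_const t (4 * (c₁ * q + a₁) ^ 3)).div hlin hden)).congr_deriv ?_
  field_simp
  ring

theorem deriv_Hquad_price : deriv (fun s => Hquad T Δ a₁ a₂ c₁ c₂ t s q) = fun _ => q := by
  funext s
  unfold Hquad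
  refine HasDerivAt.deriv ?_
  simpa using ((((hasDerivAt_id' s).sub_const (Δ / 2)).sub_const a₂).const_mul q).sub_const
    (c₂ / 2 * q ^ 2) |>.sub_const (4 * (c₁ * q + a₁) ^ 3 / (9 * c₁ ^ 2 * (T - t)))

theorem hasDerivAt_Hquad_inventory (hc₁ : c₁ ≠ 0) :
    HasDerivAt (fun p => Hquad T Δ a₁ a₂ c₁ c₂ t S p)
      (S - Δ / 2 - a₂ - c₂ * q - 4 * (c₁ * q + a₁) ^ 2 / (3 * c₁ * (T - t))) q := by
  have hA : HasDerivAt (fun p => c₁ * p + a₁) c₁ q := by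
    simpa using ((hasDerivAt_id' q).const_mul c₁).add_const a₁
  unfold Hquad
  refine ((((hasDerivAt_id' q).mul_const (S - Δ / 2 - a₂)).sub
    ((hasDerivAt_pow 2 q).const_mul (c₂ / 2))).sub
    (((hA.pow 3).const_mul 4).div_const (9 * c₁ ^ 2 * (T - t)))).congr_deriv ?_
  field_simp
  ring

end Derivatives

theorem stmt_2_general (T σ Δ a₁ a₂ c₁ c₂ : ℝ) (ha₁ : 0 < a₁)
    (hc₁ : 0 < c₁) (t S q : ℝ) (htT : t < T) (hq : 0 < q) :
    deriv (fun τ => Hquad T Δ a₁ a₂ c₁ c₂ τ S q) t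
      + σ ^ 2 / 2 * deriv (deriv (fun s => Hquad T Δ a₁ a₂ c₁ c₂ t s q)) S
      + sSup {y : ℝ | ∃ ν : ℝ, 0 ≤ ν ∧ y =
          -(c₁ * ν ^ 2 + c₂ * ν) * deriv (fun s => Hquad T Δ a₁ a₂ c₁ c₂ t s q) S
          - ν * deriv (fun p => Hquad T Δ a₁ a₂ c₁ c₂ t S p) q
          + (S - Δ / 2 - a₁ * ν - a₂) * ν} = 0 := by
  rw [(hasDerivAt_Hquad_time T Δ a₁ a₂ c₁ c₂ t S q hc₁.ne' htT.ne).deriv, deriv_Hquad_price,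
    deriv_const, (hasDerivAt_Hquad_inventory T Δ a₁ a₂ c₁ c₂ t S q hc₁.ne').deriv]
  beta_reduce
  have hTt : 0 < T - t := sub_pos.2 htT
  set A := c₁ * q + a₁
  set B := 4 * A ^ 2 / (3 * c₁ * (T - t)) with hB
  have hA : 0 < A := by positivity
  have hamiltonian (ν : ℝ) : -(c₁ * ν ^ 2 + c₂ * ν) * q
      - ν * (S - Δ / 2 - a₂ - c₂ * q - B) + (S - Δ / 2 - a₁ * ν - a₂) * ν
      = -A * ν ^ 2 + B * ν := by ring
  simp_rw [hamiltonian]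
  rw [(isGreatest_neg_quadratic_nonneg hA (by positivity)).csSup_eq, hB]
  field_simp
  ring

/-- With linear TPI and quadratic PPI, the candidate value function
`H(t,S,q) = q(S − Δ/2 − a₂) − (c₂/2)q² − 4(c₁q + a₁)³/(9c₁²(T−t))` satisfies the
HJB equation
`∂ₜH + (σ²/2)∂²_{SS}H + sup_{ν ≥ 0} {−(c₁ν² + c₂ν) ∂_S H − ν ∂_q H + (S − Δ/2 − a₁ν − a₂)ν} = 0`
at every point with `0 ≤ t < T` and `q > 0`. -/
theorem stmt_2 (T σ Δ a₁ a₂ c₁ c₂ : ℝ) (hT : 0 < T) (hσ : 0 ≤ σ) (ha₁ : 0 < a₁)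
    (hc₁ : 0 < c₁) (t S q : ℝ) (ht0 : 0 ≤ t) (htT : t < T) (hq : 0 < q) :
    deriv (fun τ => Hquad T Δ a₁ a₂ c₁ c₂ τ S q) t
      + σ ^ 2 / 2 * deriv (deriv (fun s => Hquad T Δ a₁ a₂ c₁ c₂ t s q)) S
      + sSup {y : ℝ | ∃ ν : ℝ, 0 ≤ ν ∧ y =
          -(c₁ * ν ^ 2 + c₂ * ν) * deriv (fun s => Hquad T Δ a₁ a₂ c₁ c₂ t s q) S
          - ν * deriv (fun p => Hquad T Δ a₁ a₂ c₁ c₂ t S p) q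
          + (S - Δ / 2 - a₁ * ν - a₂) * ν} = 0 :=
  stmt_2_general T σ Δ a₁ a₂ c₁ c₂ ha₁ hc₁ t S q htT hq
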